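/- Let p be a prime and R a commutative ring in which (p-1)! is invertible, let I ⊆ R be an ideal and k ≥ 1 an integer. Then for every x ∈ I^k, the element log_p(exp_p(x)) - x lies in I^{pk}, and the element exp_p(log_p(1 + x)) - (1 + x) lies in I^{pk}. -/

import Mathlib

/-!
Both claims are specialisations, at `X = x`, of the polynomial divisibilities
`X ^ p ∣ log_p (exp_p X) - X` and `X ^ p ∣ exp_p (log_p (1 + X)) - (1 + X)` in `R[X]`.
These follow from a formal differential equation: modulo `X ^ (p - 1)` the truncations still
satisfy `exp_p' = exp_p` and `log_p (1 + u)' = u' / (1 + u)`, so each difference `F` has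
`F(0) = 0` and `F' ≡ F * S`. Since `1, …, p - 1` are invertible, comparing coefficients
forces the first `p` coefficients of `F` to vanish.
-/

/-- The `p`-truncated exponential `exp_p(x) = ∑_{j=0}^{p-1} x^j / j!`. -/
noncomputable def truncExp (p : ℕ) {R : Type*} [CommRing R] (x : R) : R :=
  ∑ j ∈ Finset.range p, Ring.inverse ((Nat.factorial j : R)) * x ^ j

/-- The `p`-truncated logarithm `log_p(r) = ∑_{m=1}^{p-1} (-1)^{m-1} (r-1)^m / m`. -/
noncomputable def truncLog (p : ℕ) {R : Type*} [CommRing R] (r : R) : R :=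
  ∑ m ∈ Finset.range (p - 1), (-1) ^ m * Ring.inverse (((m + 1 : ℕ) : R)) * (r - 1) ^ (m + 1)

open Polynomial Finset
open scoped Nat

theorem map_ringInverse {M N F : Type*} [MonoidWithZero M] [MonoidWithZero N] [FunLike F M N]
    [MonoidHomClass F M N] (f : F) {a : M} (ha : IsUnit a) :
    f (Ring.inverse a) = Ring.inverse (f a) := by
  have h := (Ring.inverse_mul_eq_iff_eq_mul (f a) 1 _ (ha.map f)).mpr
    (by rw [← map_mul, Ring.mul_inverse_cancel a ha, map_one])
  rwa [mul_one, eq_comm] at h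

section Units

variable {R : Type*} [CommRing R] {n : ℕ}

theorem isUnit_factorial_of_le (hn : IsUnit (n ! : R)) {m : ℕ} (hm : m ≤ n) :
    IsUnit (m ! : R) :=
  isUnit_of_dvd_unit (Nat.cast_dvd_cast (Nat.factorial_dvd_factorial hm)) hn

theorem isUnit_natCast_of_le (hn : IsUnit (n ! : R)) {m : ℕ} (hm0 : 0 < m) (hm : m ≤ n) :
    IsUnit (m : R) :=
  isUnit_of_dvd_unit (Nat.cast_dvd_cast (Nat.dvd_factorial hm0 hm)) hn

theorem ringInverse_factorial_succ_mul (hn : IsUnit ((n + 1)! : R)) :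
    Ring.inverse ((n + 1)! : R) * (n + 1 : R) = Ring.inverse (n ! : R) := by
  rw [Ring.inverse_mul_eq_iff_eq_mul _ _ _ hn, Nat.factorial_succ, Nat.cast_mul, mul_assoc,
    Ring.mul_inverse_cancel _ (isUnit_factorial_of_le hn n.le_succ), mul_one, Nat.cast_succ]

end Units

section Truncated

variable {R S : Type*} [CommRing R] [CommRing S] {p : ℕ}

theorem truncExp_succ (n : ℕ) (x : R) :
    truncExp (n + 1) x = truncExp n x + Ring.inverse (n ! : R) * x ^ n :=
  sum_range_succ _ _

theorem truncExp_zero (hp : 0 < p) : truncExp p (0 : R) = 1 := by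
  obtain ⟨n, rfl⟩ := Nat.exists_eq_add_of_lt hp
  simp [truncExp, sum_range_succ']

theorem truncLog_one : truncLog p (1 : R) = 0 := by
  simp [truncLog]

theorem map_truncExp (f : R →+* S) (hfac : IsUnit ((p - 1)! : R)) (x : R) :
    f (truncExp p x) = truncExp p (f x) := by
  simp only [truncExp, map_sum, map_mul, map_pow]
  refine sum_congr rfl fun j hj => ?_
  rw [map_ringInverse f (isUnit_factorial_of_le hfac (by grind)), map_natCast]

theorem map_truncLog (f : R →+* S) (hfac : IsUnit ((p - 1)! : R)) (r : R) :
    f (truncLog p r) = truncLog p (f r) := by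
  simp only [truncLog, map_sum, map_mul, map_pow, map_neg, map_one, map_sub]
  refine sum_congr rfl fun m hm => ?_
  rw [map_ringInverse f (isUnit_natCast_of_le hfac m.succ_pos (by grind)), map_natCast]

end Truncated

section Derivative

variable {R : Type*} [CommRing R] {p : ℕ}

theorem ringInverse_natCast_eq_C {n : ℕ} (hn : IsUnit (n : R)) :
    Ring.inverse (n : R[X]) = C (Ring.inverse (n : R)) := by
  rw [map_ringInverse C hn, map_natCast]

theorem derivative_truncExp_succ {n : ℕ} (hn : IsUnit (n ! : R)) (q : R[X]) :
    derivative (truncExp (n + 1) q) = truncExp n q * derivative q := by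
  induction n with
  | zero => simp [truncExp]
  | succ n ih =>
    have hn' : IsUnit (n ! : R) := isUnit_factorial_of_le hn n.le_succ
    have hcoeff : C (Ring.inverse ((n + 1)! : R)) * C ((n + 1 : ℕ) : R) =
        C (Ring.inverse (n ! : R)) := by
      rw [← C_mul, Nat.cast_succ, ringInverse_factorial_succ_mul hn]
    rw [truncExp_succ, derivative_add, ih hn', truncExp_succ, ringInverse_natCast_eq_C hn,
      ringInverse_natCast_eq_C hn', derivative_C_mul, derivative_pow, Nat.add_sub_cancel]
    linear_combination (q ^ n * derivative q) * hcoeff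

theorem pow_dvd_derivative_truncExp_sub_mul (hp : 0 < p) (hfac : IsUnit ((p - 1)! : R))
    (q : R[X]) : q ^ (p - 1) ∣ derivative (truncExp p q) - truncExp p q * derivative q := by
  obtain ⟨n, rfl⟩ := Nat.exists_eq_add_of_lt hp
  rw [zero_add, Nat.add_sub_cancel] at hfac ⊢
  rw [derivative_truncExp_succ hfac, truncExp_succ]
  exact Dvd.intro (-(Ring.inverse (n ! : R[X]) * derivative q)) (by ring)

theorem derivative_truncLog (hfac : IsUnit ((p - 1)! : R)) (q : R[X]) :
    derivative (truncLog p q) = (∑ m ∈ range (p - 1), (1 - q) ^ m) * derivative q := by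
  rw [truncLog, derivative_sum, sum_mul]
  refine sum_congr rfl fun m hm => ?_
  have hm : IsUnit ((m + 1 : ℕ) : R) := isUnit_natCast_of_le hfac m.succ_pos (by grind)
  have hinv : C (Ring.inverse ((m + 1 : ℕ) : R)) * C ((m + 1 : ℕ) : R) = 1 := by
    rw [← C_mul, Ring.inverse_mul_cancel _ hm, C_1]
  rw [ringInverse_natCast_eq_C hm, mul_comm ((-1) ^ m), mul_assoc, derivative_C_mul,
    derivative_mul, derivative_pow, derivative_pow, derivative_sub, derivative_one,
    derivative_neg, derivative_one, show (1 - q) = -1 * (q - 1) by ring, mul_pow,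
    Nat.add_sub_cancel]
  linear_combination ((-1) ^ m * (q - 1) ^ m * derivative q) * hinv

end Derivative

namespace Polynomial

variable {R : Type*} [CommRing R]

theorem X_pow_succ_dvd_of_pow_dvd_derivative_sub_mul {n : ℕ} (hn : IsUnit (n ! : R))
    {F S : R[X]} (h0 : F.coeff 0 = 0) (hd : X ^ n ∣ derivative F - F * S) :
    X ^ (n + 1) ∣ F := by
  suffices ∀ j ≤ n, X ^ (j + 1) ∣ F from this n le_rfl
  intro j hj
  induction j with
  | zero => rwa [zero_add, pow_one, X_dvd_iff]
  | succ j ih =>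
    have hF : X ^ (j + 1) ∣ F := ih (by omega)
    have hF' : X ^ (j + 1) ∣ derivative F := by
      simpa using dvd_add ((pow_dvd_pow X hj).trans hd) (dvd_mul_of_dvd_left hF S)
    have hcoeff : F.coeff (j + 1) = 0 := by
      have h := X_pow_dvd_iff.mp hF' j j.lt_succ_self
      rw [coeff_derivative, ← Nat.cast_succ] at h
      exact (isUnit_natCast_of_le hn j.succ_pos hj).mul_left_eq_zero.mp h
    rw [X_pow_dvd_iff] at hF ⊢
    intro d hd
    rcases Nat.lt_succ_iff_lt_or_eq.mp hd with hd | rfl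
    exacts [hF d hd, hcoeff]

theorem eval_mem_pow_of_X_pow_dvd {F : R[X]} {n : ℕ} (hF : X ^ n ∣ F) {I : Ideal R} {k : ℕ}
    {x : R} (hx : x ∈ I ^ k) : F.eval x ∈ I ^ (n * k) := by
  obtain ⟨G, rfl⟩ := hF
  rw [eval_mul, eval_pow, eval_X, mul_comm n, pow_mul]
  exact Ideal.mul_mem_right _ _ (Ideal.pow_mem_pow hx n)

end Polynomial

section Identities

variable {R : Type*} [CommRing R] {p : ℕ}

theorem eval_truncExp (hfac : IsUnit ((p - 1)! : R)) (q : R[X]) (x : R) :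
    (truncExp p q).eval x = truncExp p (q.eval x) :=
  map_truncExp (evalRingHom x) (by simpa using hfac.map C) q

theorem eval_truncLog (hfac : IsUnit ((p - 1)! : R)) (q : R[X]) (x : R) :
    (truncLog p q).eval x = truncLog p (q.eval x) :=
  map_truncLog (evalRingHom x) (by simpa using hfac.map C) q

theorem X_pow_dvd_truncLog_truncExp_X_sub_X (hp : 0 < p) (hfac : IsUnit ((p - 1)! : R)) :
    X ^ p ∣ truncLog p (truncExp p (X : R[X])) - X := by
  set E := truncExp p (X : R[X])
  have hE : X ∣ 1 - E := by
    rw [X_dvd_iff, coeff_zero_eq_eval_zero, eval_sub, eval_one, eval_truncExp hfac, eval_X,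
      truncExp_zero hp, sub_self]
  have hE' : X ^ (p - 1) ∣ derivative E - E := by
    simpa using pow_dvd_derivative_truncExp_sub_mul hp hfac X
  set G := ∑ m ∈ range (p - 1), (1 - E) ^ m
  have hG : G * E = 1 - (1 - E) ^ (p - 1) := by
    simpa using geom_sum_mul_neg (1 - E) (p - 1)
  have h0 : (truncLog p E - X).coeff 0 = 0 := by
    rw [coeff_zero_eq_eval_zero, eval_sub, eval_truncLog hfac, eval_truncExp hfac, eval_X,
      truncExp_zero hp, truncLog_one, sub_zero]
  have hd : derivative (truncLog p E - X) = G * (derivative E - E) - (1 - E) ^ (p - 1) := by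
    rw [derivative_sub, derivative_truncLog hfac, derivative_X]
    linear_combination hG
  have hdvd : X ^ (p - 1) ∣ derivative (truncLog p E - X) - (truncLog p E - X) * 0 := by
    rw [mul_zero, sub_zero, hd]
    exact dvd_sub (dvd_mul_of_dvd_right hE' G) (pow_dvd_pow_of_dvd hE (p - 1))
  have h := X_pow_succ_dvd_of_pow_dvd_derivative_sub_mul hfac h0 hdvd
  rwa [Nat.sub_add_cancel hp] at h

theorem X_pow_dvd_truncExp_truncLog_one_add_X_sub (hp : 0 < p)
    (hfac : IsUnit ((p - 1)! : R)) :
    X ^ p ∣ truncExp p (truncLog p (1 + X : R[X])) - (1 + X) := by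
  set L := truncLog p (1 + X : R[X])
  have hL : X ∣ L := by
    rw [X_dvd_iff, coeff_zero_eq_eval_zero, eval_truncLog hfac, eval_add, eval_one, eval_X,
      add_zero, truncLog_one]
  set G := ∑ m ∈ range (p - 1), (-X : R[X]) ^ m
  have hL' : derivative L = G := by
    rw [derivative_truncLog hfac, derivative_add, derivative_one, derivative_X, zero_add, mul_one,
      sub_add_cancel_left]
  have hG : G * (1 + X) = 1 - (-X) ^ (p - 1) := by
    simpa using geom_sum_mul_neg (-X : R[X]) (p - 1)
  have hexp := pow_dvd_derivative_truncExp_sub_mul hp hfac L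
  rw [hL'] at hexp
  have h0 : (truncExp p L - (1 + X)).coeff 0 = 0 := by
    rw [coeff_zero_eq_eval_zero, eval_sub, eval_truncExp hfac, eval_truncLog hfac, eval_add,
      eval_one, eval_X, add_zero, truncLog_one, truncExp_zero hp, sub_self]
  have hd : derivative (truncExp p L - (1 + X)) - (truncExp p L - (1 + X)) * G =
      (derivative (truncExp p L) - truncExp p L * G) - (-X) ^ (p - 1) := by
    rw [derivative_sub, derivative_add, derivative_one, derivative_X]
    linear_combination hG
  have hdvd : X ^ (p - 1) ∣
      derivative (truncExp p L - (1 + X)) - (truncExp p L - (1 + X)) * G := by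
    rw [hd]
    exact dvd_sub ((pow_dvd_pow_of_dvd hL (p - 1)).trans hexp)
      (pow_dvd_pow_of_dvd (dvd_neg.mpr dvd_rfl) (p - 1))
  have h := X_pow_succ_dvd_of_pow_dvd_derivative_sub_mul hfac h0 hdvd
  rwa [Nat.sub_add_cancel hp] at h

end Identities

theorem truncLog_truncExp_sub_mem_general (p : ℕ) (hp : p.Prime) (R : Type*) [CommRing R]
    (hfac : IsUnit ((Nat.factorial (p - 1) : R))) (I : Ideal R) (k : ℕ) :
    ∀ x ∈ I ^ k,
      truncLog p (truncExp p x) - x ∈ I ^ (p * k) ∧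
      truncExp p (truncLog p (1 + x)) - (1 + x) ∈ I ^ (p * k) := by
  intro x hx
  constructor
  · simpa [eval_truncLog hfac, eval_truncExp hfac] using
      eval_mem_pow_of_X_pow_dvd (X_pow_dvd_truncLog_truncExp_X_sub_X hp.pos hfac) hx
  · simpa [eval_truncLog hfac, eval_truncExp hfac] using
      eval_mem_pow_of_X_pow_dvd (X_pow_dvd_truncExp_truncLog_one_add_X_sub hp.pos hfac) hx

/-- for `x ∈ I^k`, `log_p(exp_p(x)) - x ∈ I^{pk}` and
`exp_p(log_p(1 + x)) - (1 + x) ∈ I^{pk}`. -/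
theorem truncLog_truncExp_sub_mem (p : ℕ) (hp : p.Prime) (R : Type*) [CommRing R]
    (hfac : IsUnit ((Nat.factorial (p - 1) : R))) (I : Ideal R) (k : ℕ) (hk : 1 ≤ k) :
    ∀ x ∈ I ^ k,
      truncLog p (truncExp p x) - x ∈ I ^ (p * k) ∧
      truncExp p (truncLog p (1 + x)) - (1 + x) ∈ I ^ (p * k) :=
  truncLog_truncExp_sub_mem_general p hp R hfac I k
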